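/- For all integers d ≥ k ≥ 2, the algebra E_d is k-round, the singleton {x_1} is a generating set of E_d, and l({x_1}) = (k−1)d − (k−2)(k−1); in particular l(E_d) ≥ (k−1)d − (k−2)(k−1). -/

import Mathlib

/-!
Give the basis vector `x_{n+1}` of `E_d` the weight `n + 1` for `n ≤ k - 2` and
`(n + 3 - k)(k - 1)` beyond. Then every product of two basis vectors is `0` or the basis vector
whose weight is the sum of theirs, so a product of `k` arbitrary elements lies in the span of the
basis vectors of weight at least `k`, i.e. of `x_k, …, x_d`; these are never a right factor of a
nonzero product, which gives roundness. Likewise a word in `x_1` evaluates to `0` or to the basis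
vector whose weight is its length, and every `x_{n+1}` is such a value (multiply `x_n` on the
right by `x_1` or by `x_{k-1}`). Hence `L_m({x_1})` is spanned by the basis vectors of weight at
most `m`, and `l({x_1})` is the largest weight, that of `x_d`, namely `(k-1)d - (k-2)(k-1)`.
-/

namespace P

/-- The list of leaves (letters) of a nonassociative word, in order. -/
def leafList {α : Type*} : FreeMagma α → List α
  | .of a => [a]
  | .mul x y => leafList x ++ leafList y

/-- The length of a nonassociative word: the number of factors. -/
def wlen {α : Type*} (w : FreeMagma α) : ℕ := (leafList w).length

/-- Evaluation of a formal word with letters in a magma `A`. -/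
def evalA {A : Type*} [Mul A] (w : FreeMagma A) : A :=
  FreeMagma.lift (id : A → A) w

/-- Evaluation of a formal word in variables `Fin n` under an assignment `v`. -/
def evalVar {A : Type*} [Mul A] {n : ℕ} (v : Fin n → A) (w : FreeMagma (Fin n)) : A :=
  FreeMagma.lift v w

/-- `w` is a word in the set `S`: all its letters belong to `S`. -/
def HasLeavesIn {A : Type*} (S : Set A) (w : FreeMagma A) : Prop :=
  ∀ a ∈ leafList w, a ∈ S

/-- `L_i(S)`: the span of all values of words in `S` of length at most `i`.
For `i = 0` this is `0`, since every word has length at least 1. -/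
def Lspan (F : Type*) {A : Type*} [Field F] [NonUnitalNonAssocRing A] [Module F A]
    (S : Set A) (i : ℕ) : Submodule F A :=
  Submodule.span F { a | ∃ w : FreeMagma A, HasLeavesIn S w ∧ wlen w ≤ i ∧ evalA w = a }

/-- `S` is a generating set of the algebra `A`. -/
def Generates (F : Type*) {A : Type*} [Field F] [NonUnitalNonAssocRing A] [Module F A]
    (S : Set A) : Prop :=
  Submodule.span F { a | ∃ w : FreeMagma A, HasLeavesIn S w ∧ evalA w = a } = ⊤

/-- The length `l(S)` of a generating set: the least `k` with `L_k(S) = A`. -/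
noncomputable def lenS (F : Type*) {A : Type*} [Field F] [NonUnitalNonAssocRing A] [Module F A]
    (S : Set A) : ℕ :=
  sInf { k | Lspan F S k = ⊤ }

/-- The characteristic sequence of a generating set `S`, as a predicate on a
nondecreasing sequence `m : Fin d → ℕ`. -/
def IsCharSeq (F : Type*) {A : Type*} [Field F] [NonUnitalNonAssocRing A] [Module F A]
    (S : Set A) {d : ℕ} (m : Fin d → ℕ) : Prop :=
  Monotone m ∧ (∀ j, 1 ≤ m j) ∧
    ∀ t : ℕ, 1 ≤ t →
      (Finset.univ.filter fun j => m j = t).card =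
        Module.finrank F (Lspan F S t) - Module.finrank F (Lspan F S (t - 1))

/-- `w` is a multilinear word using each variable of `T` exactly once. -/
def IsMultilinearOn {n : ℕ} (T : Finset (Fin n)) (w : FreeMagma (Fin n)) : Prop :=
  (leafList w : Multiset (Fin n)) = T.val

/-- Membership in `D_0(z_0,…,z_k)`: multilinear words in `z_0,…,z_k` except those of
length `k+1` in which `z_0` is a factor of the last multiplication. -/
def InD0 {k : ℕ} (w : FreeMagma (Fin (k + 1))) : Prop :=
  (leafList w : Multiset (Fin (k + 1))).Nodup ∧
    ¬∃ u : FreeMagma (Fin (k + 1)),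
        IsMultilinearOn (Finset.univ.erase 0) u ∧
          (w = FreeMagma.of 0 * u ∨ w = u * FreeMagma.of 0)

/-- Membership in `D_l(z_0,…,z_k)`: multilinear words in `z_0,…,z_k` except those of
length `k+1` in which `z_0` occurs in the first factor of the last multiplication. -/
def InDl {k : ℕ} (w : FreeMagma (Fin (k + 1))) : Prop :=
  (leafList w : Multiset (Fin (k + 1))).Nodup ∧
    ¬((leafList w : Multiset (Fin (k + 1))) = (Finset.univ : Finset (Fin (k + 1))).val ∧
      ∃ w1 w2 : FreeMagma (Fin (k + 1)), w = w1 * w2 ∧ (0 : Fin (k + 1)) ∈ leafList w1)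

/-- Membership in `D_r(z_0,…,z_k)`: multilinear words in `z_0,…,z_k` except those of
length `k+1` in which `z_0` occurs in the second factor of the last multiplication. -/
def InDr {k : ℕ} (w : FreeMagma (Fin (k + 1))) : Prop :=
  (leafList w : Multiset (Fin (k + 1))).Nodup ∧
    ¬((leafList w : Multiset (Fin (k + 1))) = (Finset.univ : Finset (Fin (k + 1))).val ∧
      ∃ w1 w2 : FreeMagma (Fin (k + 1)), w = w1 * w2 ∧ (0 : Fin (k + 1)) ∈ leafList w2)

/-- The algebra `A` is `k`-mixing. -/
def IsKMixing (F A : Type*) [Field F] [NonUnitalNonAssocRing A] [Module F A] (k : ℕ) : Prop :=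
  ∀ (x : A) (y : Fin k → A) (w : FreeMagma (Fin (k + 1))),
    (∃ u, IsMultilinearOn (Finset.univ.erase 0) u ∧
        (w = FreeMagma.of 0 * u ∨ w = u * FreeMagma.of 0)) →
      evalVar (Fin.cons x y) w ∈
        Submodule.span F
          { a | ∃ z : FreeMagma (Fin (k + 1)), InD0 z ∧ evalVar (Fin.cons x y) z = a }

/-- The algebra `A` is `k`-sliding. -/
def IsKSliding (F A : Type*) [Field F] [NonUnitalNonAssocRing A] [Module F A] (k : ℕ) : Prop :=
  (∀ (x : A) (y : Fin k → A) (u : FreeMagma (Fin (k + 1))),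
      IsMultilinearOn (Finset.univ.erase 0) u →
        evalVar (Fin.cons x y) (u * FreeMagma.of 0) ∈
          Submodule.span F
            { a | ∃ z : FreeMagma (Fin (k + 1)), InDl z ∧ evalVar (Fin.cons x y) z = a }) ∨
  (∀ (x : A) (y : Fin k → A) (u : FreeMagma (Fin (k + 1))),
      IsMultilinearOn (Finset.univ.erase 0) u →
        evalVar (Fin.cons x y) (FreeMagma.of 0 * u) ∈
          Submodule.span F
            { a | ∃ z : FreeMagma (Fin (k + 1)), InDr z ∧ evalVar (Fin.cons x y) z = a })

/-- `u` is a subword of `w`. -/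
inductive IsSubword {A : Type*} : FreeMagma A → FreeMagma A → Prop
  | refl (w : FreeMagma A) : IsSubword w w
  | left {s u : FreeMagma A} (v : FreeMagma A) : IsSubword s u → IsSubword s (u * v)
  | right (u : FreeMagma A) {s v : FreeMagma A} : IsSubword s v → IsSubword s (u * v)

/-- `IsSprout w L`: `L` is a sprout sequence of the word `w` (with the convention that
words of length 1 have the empty sprout sequence). -/
inductive IsSprout {A : Type*} : FreeMagma A → List (FreeMagma A) → Prop
  | single (a : A) : IsSprout (FreeMagma.of a) []
  | cons_l {u v : FreeMagma A} {L : List (FreeMagma A)} :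
      wlen u ≤ wlen v → IsSprout v L → IsSprout (u * v) (u :: L)
  | cons_r {u v : FreeMagma A} {L : List (FreeMagma A)} :
      wlen v ≤ wlen u → IsSprout u L → IsSprout (u * v) (v :: L)

/-- A word is `k`-bounded if it has length 1 or admits an `l`-sprout sequence all of whose
terms are strictly less than `k`. -/
def KBounded {A : Type*} (k : ℕ) (w : FreeMagma A) : Prop :=
  ∃ L : List (FreeMagma A), IsSprout w L ∧ ∀ u ∈ L, wlen u < k

/-- A word `w` in `S` is irreducible if it does not lie in `L_m(S)` for any `m < l(w)`. -/
def Irred (F : Type*) {A : Type*} [Field F] [NonUnitalNonAssocRing A] [Module F A]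
    (S : Set A) (w : FreeMagma A) : Prop :=
  ∀ m : ℕ, m < wlen w → evalA w ∉ Lspan F S m

/-- The step function of a word: the least `t` such that `w` has a subword of
length `l(w) - 2t - 1`. -/
noncomputable def stepFn {A : Type*} (w : FreeMagma A) : ℕ :=
  sInf { t : ℕ | ∃ u : FreeMagma A, IsSubword u w ∧ wlen u + 2 * t + 1 = wlen w }

/-- `w` is a `p`-step word for the generating set `S`. -/
def IsPStepWord (F : Type*) {A : Type*} [Field F] [NonUnitalNonAssocRing A] [Module F A]
    (S : Set A) (w : FreeMagma A) (p : ℕ) : Prop :=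
  HasLeavesIn S w ∧ Irred F S w ∧ KBounded 3 w ∧ stepFn w = p ∧
    ∀ v : FreeMagma A, HasLeavesIn S v → Irred F S v → KBounded 3 v → wlen v = wlen w →
      p ≤ stepFn v

/-- `A` is `k`-round: `x · v = 0` for every product `v` of `k` elements. -/
def IsKRound (A : Type*) [NonUnitalNonAssocRing A] (k : ℕ) : Prop :=
  ∀ (x : A) (w : FreeMagma A), wlen w = k → x * evalA w = 0

/-- `A` is `k`-based. -/
def IsKBased (A : Type*) [NonUnitalNonAssocRing A] (k : ℕ) : Prop :=
  ∀ (x : A) (u v : FreeMagma A), wlen u + wlen v = k →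
    x * (evalA u * evalA v) = evalA u * (x * evalA v) ∧
      (evalA u * evalA v) * x = (evalA u * x) * evalA v

/-- The set `P(x,y,z)`. -/
def Pset {A : Type*} [Mul A] (x y z : A) : Set A :=
  {(x*z)*y, (z*x)*y, (y*z)*x, (z*y)*x, x*(z*y), x*(y*z), y*(x*z), y*(z*x),
    x*y, y*x, x*z, z*x, y*z, z*y, x, y, z}

/-- The set `Q_l(x,y,z)`. -/
def Qlset {A : Type*} [Mul A] (x y z : A) : Set A :=
  {x*(z*y), x*(y*z), y*(x*z), y*(z*x), x*y, y*x, x*z, z*x, y*z, z*y, x, y, z}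

/-- The set `Q_r(x,y,z)`. -/
def Qrset {A : Type*} [Mul A] (x y z : A) : Set A :=
  {(x*z)*y, (z*x)*y, (y*z)*x, (z*y)*x, x*y, y*x, x*z, z*x, y*z, z*y, x, y, z}

/-- `A` is a mixing algebra. -/
def IsMixingAlg (F A : Type*) [Field F] [NonUnitalNonAssocRing A] [Module F A] : Prop :=
  ∀ x y z : A, (x*y)*z ∈ Submodule.span F (Pset x y z) ∧
    z*(x*y) ∈ Submodule.span F (Pset x y z)

/-- `A` is a sliding algebra. -/
def IsSlidingAlg (F A : Type*) [Field F] [NonUnitalNonAssocRing A] [Module F A] : Prop :=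
  (∀ x y z : A, z*(x*y) ∈ Submodule.span F (Qrset x y z)) ∨
  (∀ x y z : A, (x*y)*z ∈ Submodule.span F (Qlset x y z))


section Words

variable {α : Type*}

@[simp] lemma leafList_of (a : α) : leafList (FreeMagma.of a) = [a] := rfl

@[simp] lemma leafList_mul (u v : FreeMagma α) :
    leafList (u * v) = leafList u ++ leafList v := rfl

@[simp] lemma wlen_of (a : α) : wlen (FreeMagma.of a) = 1 := rfl

@[simp] lemma wlen_mul (u v : FreeMagma α) : wlen (u * v) = wlen u + wlen v :=
  List.length_append ..

@[simp] lemma hasLeavesIn_of {S : Set α} {a : α} : HasLeavesIn S (FreeMagma.of a) ↔ a ∈ S := by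
  simp [HasLeavesIn]

@[simp] lemma hasLeavesIn_mul {S : Set α} {u v : FreeMagma α} :
    HasLeavesIn S (u * v) ↔ HasLeavesIn S u ∧ HasLeavesIn S v := by
  simp only [HasLeavesIn, leafList_mul, List.forall_mem_append]

@[simp] lemma evalA_of [Mul α] (a : α) : evalA (FreeMagma.of a) = a := rfl

@[simp] lemma evalA_mul [Mul α] (u v : FreeMagma α) : evalA (u * v) = evalA u * evalA v :=
  map_mul (FreeMagma.lift id) u v

end Words

section Length

variable {F A : Type*} [Field F] [NonUnitalNonAssocRing A] [Module F A]

lemma Lspan_mono (S : Set A) : Monotone (Lspan F S) := fun _ _ hmn =>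
  Submodule.span_mono fun _ ⟨w, hw, hwm, hwa⟩ => ⟨w, hw, hwm.trans hmn, hwa⟩

lemma generates_of_Lspan_eq_top {S : Set A} {N : ℕ} (htop : Lspan F S N = ⊤) : Generates F S :=
  top_unique <| htop.ge.trans <| Submodule.span_mono fun _ ⟨w, hw, _, hwa⟩ => ⟨w, hw, hwa⟩

lemma lenS_eq_of_Lspan {S : Set A} {N : ℕ} (htop : Lspan F S N = ⊤) (hne : Lspan F S (N - 1) ≠ ⊤) :
    lenS F S = N := by
  refine le_antisymm (Nat.sInf_le htop) (le_csInf ⟨N, htop⟩ fun t ht => ?_)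
  by_contra! htN
  exact hne (top_unique (ht.ge.trans (Lspan_mono S (by omega))))

end Length

lemma mul_mem_of_mem_span {R A : Type*} [CommSemiring R] [NonUnitalNonAssocSemiring A]
    [Module R A] [SMulCommClass R A A] [IsScalarTower R A A] {s t : Set A} {T : Submodule R A}
    (h : ∀ a ∈ s, ∀ c ∈ t, a * c ∈ T) {x y : A}
    (hx : x ∈ Submodule.span R s) (hy : y ∈ Submodule.span R t) : x * y ∈ T := by
  have hle : Submodule.map₂ (LinearMap.mul R A) (Submodule.span R s) (Submodule.span R t) ≤ T := by
    rw [Submodule.map₂_span_span, Submodule.span_le]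
    rintro _ ⟨a, ha, c, hc, rfl⟩
    exact h a ha c hc
  exact hle (Submodule.apply_mem_map₂ _ hx hy)

section GradedBasis

variable {F A ι : Type*} [Field F] [NonUnitalNonAssocRing A] [Module F A]
  {b : Module.Basis ι F A} {wt : ι → ℕ}

lemma exists_word_eq_basis (hwt : ∀ i, 1 ≤ wt i)
    (hfac : ∀ l, 2 ≤ wt l → ∃ i j, wt i + wt j = wt l ∧ b i * b j = b l) (l : ι) :
    ∃ w : FreeMagma A, HasLeavesIn (b '' {i | wt i = 1}) w ∧ wlen w = wt l ∧ evalA w = b l := by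
  induction hn : wt l using Nat.strong_induction_on generalizing l with
  | _ n ih =>
    by_cases hl : wt l = 1
    · exact ⟨FreeMagma.of (b l), hasLeavesIn_of.mpr ⟨l, hl, rfl⟩, by simp [← hn, hl], rfl⟩
    obtain ⟨i, j, hij, hmul⟩ := hfac l (by have := hwt l; omega)
    have := hwt i
    have := hwt j
    obtain ⟨u, hu, hlu, hub⟩ := ih (wt i) (by omega) i rfl
    obtain ⟨v, hv, hlv, hvb⟩ := ih (wt j) (by omega) j rfl
    exact ⟨u * v, hasLeavesIn_mul.mpr ⟨hu, hv⟩, by simp [hlu, hlv, hij, hn],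
      by rw [evalA_mul, hub, hvb, hmul]⟩

lemma Lspan_eq_top (hwt : ∀ i, 1 ≤ wt i)
    (hfac : ∀ l, 2 ≤ wt l → ∃ i j, wt i + wt j = wt l ∧ b i * b j = b l) {N : ℕ}
    (hN : ∀ i, wt i ≤ N) : Lspan F (b '' {i | wt i = 1}) N = ⊤ := by
  rw [eq_top_iff, ← b.span_eq, Submodule.span_le]
  rintro _ ⟨l, rfl⟩
  obtain ⟨w, hw, hwl, hwb⟩ := exists_word_eq_basis hwt hfac l
  exact Submodule.subset_span ⟨w, hw, hwl ▸ hN l, hwb⟩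

def IsGradedMonomialBasis (b : Module.Basis ι F A) (wt : ι → ℕ) : Prop :=
  ∀ i j, b i * b j = 0 ∨ ∃ l, wt l = wt i + wt j ∧ b i * b j = b l

namespace IsGradedMonomialBasis

lemma evalA_eq_zero_or (hb : IsGradedMonomialBasis b wt) {w : FreeMagma A}
    (hw : HasLeavesIn (b '' {i | wt i = 1}) w) :
    evalA w = 0 ∨ ∃ l, wt l = wlen w ∧ evalA w = b l := by
  induction w using FreeMagma.recOnMul with
  | ih1 a =>
    obtain ⟨i, hi, rfl⟩ := hasLeavesIn_of.mp hw
    exact Or.inr ⟨i, hi, rfl⟩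
  | ih2 u v ihu ihv =>
    obtain ⟨hu, hv⟩ := hasLeavesIn_mul.mp hw
    rcases ihu hu with h | ⟨i, hi, hu'⟩
    · simp [h]
    rcases ihv hv with h | ⟨j, hj, hv'⟩
    · simp [h]
    rw [evalA_mul, wlen_mul, hu', hv', ← hi, ← hj]
    exact hb i j

lemma Lspan_le (hb : IsGradedMonomialBasis b wt) (m : ℕ) :
    Lspan F (b '' {i | wt i = 1}) m ≤ Submodule.span F (b '' {i | wt i ≤ m}) := by
  rw [Lspan, Submodule.span_le]
  rintro _ ⟨w, hw, hwm, rfl⟩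
  rcases hb.evalA_eq_zero_or hw with h | ⟨l, hl, h⟩ <;> rw [h]
  · exact Submodule.zero_mem _
  · exact Submodule.subset_span ⟨l, by simp only [Set.mem_ofPred_eq]; omega, rfl⟩

lemma lenS_eq (hb : IsGradedMonomialBasis b wt) (hwt : ∀ i, 1 ≤ wt i)
    (hfac : ∀ l, 2 ≤ wt l → ∃ i j, wt i + wt j = wt l ∧ b i * b j = b l) {imax : ι}
    (hmax : ∀ i, wt i ≤ wt imax) : lenS F (b '' {i | wt i = 1}) = wt imax := by
  refine lenS_eq_of_Lspan (Lspan_eq_top hwt hfac hmax) fun htop => ?_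
  have hmem := hb.Lspan_le (wt imax - 1) (htop ▸ Submodule.mem_top (x := b imax))
  have hlt : ¬wt imax ≤ wt imax - 1 := by have := hwt imax; omega
  exact b.linearIndependent.notMem_span_image hlt hmem

variable [SMulCommClass F A A] [IsScalarTower F A A]

lemma mul_mem_span (hb : IsGradedMonomialBasis b wt) {p q : ℕ} {x y : A}
    (hx : x ∈ Submodule.span F (b '' {i | p ≤ wt i}))
    (hy : y ∈ Submodule.span F (b '' {i | q ≤ wt i})) :
    x * y ∈ Submodule.span F (b '' {i | p + q ≤ wt i}) := by
  refine mul_mem_of_mem_span ?_ hx hy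
  rintro _ ⟨i, hi, rfl⟩ _ ⟨j, hj, rfl⟩
  rcases hb i j with h | ⟨l, hl, h⟩ <;> rw [h]
  · exact Submodule.zero_mem _
  · exact Submodule.subset_span ⟨l, by simp only [Set.mem_ofPred_eq] at *; omega, rfl⟩

lemma evalA_mem_span (hb : IsGradedMonomialBasis b wt) (hwt : ∀ i, 1 ≤ wt i)
    (w : FreeMagma A) : evalA w ∈ Submodule.span F (b '' {i | wlen w ≤ wt i}) := by
  induction w using FreeMagma.recOnMul with
  | ih1 a =>
    have hall : {i | wlen (FreeMagma.of a) ≤ wt i} = Set.univ := Set.eq_univ_of_forall hwt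
    rw [hall, Set.image_univ, b.span_eq]
    exact Submodule.mem_top
  | ih2 u v ihu ihv => simpa only [evalA_mul, wlen_mul] using hb.mul_mem_span ihu ihv

lemma isKRound (hb : IsGradedMonomialBasis b wt) (hwt : ∀ i, 1 ≤ wt i) {k : ℕ}
    (hann : ∀ i j, k ≤ wt j → b i * b j = 0) : IsKRound A k := by
  intro x w hw
  have hx : x ∈ Submodule.span F (Set.range b) := b.span_eq ▸ Submodule.mem_top
  refine (Submodule.mem_bot F).mp (mul_mem_of_mem_span ?_ hx (hw ▸ hb.evalA_mem_span hwt w))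
  rintro _ ⟨i, rfl⟩ _ ⟨j, hj, rfl⟩
  rw [hann i j hj]
  exact Submodule.zero_mem _

end IsGradedMonomialBasis

end GradedBasis

/-- The weight of the basis vector `b n = x_{n+1}` of `E_d`; the truncated subtraction makes it
`n + 1` for `n + 2 ≤ k`. -/
def weight (k n : ℕ) : ℕ := n + 1 + (n + 2 - k) * (k - 2)

lemma weight_zero (k : ℕ) : weight k 0 = 1 := by
  rcases le_or_gt 2 k with hk | hk
  · simp [weight, Nat.sub_eq_zero_of_le hk]
  · simp [weight, Nat.sub_eq_zero_of_le hk.le]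

lemma weight_of_le {k n : ℕ} (h : n + 2 ≤ k) : weight k n = n + 1 := by
  simp [weight, Nat.sub_eq_zero_of_le h]

lemma weight_succ_of_lt {k n : ℕ} (h : n + 3 ≤ k) : weight k (n + 1) = weight k n + 1 := by
  rw [weight_of_le h, weight_of_le (by omega)]

lemma weight_succ_of_le {k n : ℕ} (hk : 2 ≤ k) (h : k ≤ n + 2) :
    weight k (n + 1) = weight k n + weight k (k - 2) := by
  rw [weight_of_le (by omega : k - 2 + 2 ≤ k), weight, weight,
    show n + 1 + 2 - k = (n + 2 - k) + 1 by omega, Nat.succ_mul]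
  omega

lemma weight_mono (k : ℕ) : Monotone (weight k) := fun _ _ h => by
  unfold weight
  gcongr

lemma le_weight (k n : ℕ) : n + 1 ≤ weight k n := Nat.le_add_right _ _

lemma weight_eq_one_iff {k n : ℕ} : weight k n = 1 ↔ n = 0 :=
  ⟨fun h => by have := le_weight k n; omega, fun h => h ▸ weight_zero k⟩

lemma weight_pred {k d : ℕ} (hk : 2 ≤ k) (hkd : k ≤ d) :
    weight k (d - 1) = (k - 1) * d - (k - 2) * (k - 1) := by
  obtain ⟨m, rfl⟩ : ∃ m, k = m + 2 := ⟨k - 2, by omega⟩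
  obtain ⟨e, rfl⟩ : ∃ e, d = m + 2 + e := ⟨d - (m + 2), by omega⟩
  symm
  apply Nat.sub_eq_of_eq_add
  rw [weight, show m + 2 + e - 1 + 2 - (m + 2) = e + 1 by omega,
    show m + 2 + e - 1 = m + 1 + e by omega, show m + 2 - 1 = m + 1 by omega, Nat.add_sub_cancel]
  ring

namespace E

variable {F A : Type*} [Field F] [NonUnitalNonAssocRing A] [Module F A]
  {d k : ℕ} (hk : 2 ≤ k) (hkd : k ≤ d) {b : Module.Basis (Fin d) F A}

lemma isGradedMonomialBasis
    (h1 : ∀ i : Fin d, (hi : (i : ℕ) + 3 ≤ k) →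
      b i * b ⟨0, by omega⟩ = b ⟨(i : ℕ) + 1, by omega⟩)
    (h2 : ∀ i : Fin d, k ≤ (i : ℕ) + 2 → (hi2 : (i : ℕ) + 2 ≤ d) →
      b i * b ⟨k - 2, by omega⟩ = b ⟨(i : ℕ) + 1, by omega⟩)
    (h0 : ∀ i j : Fin d, ¬((j : ℕ) = 0 ∧ (i : ℕ) + 3 ≤ k) →
      ¬((j : ℕ) + 2 = k ∧ k ≤ (i : ℕ) + 2 ∧ (i : ℕ) + 2 ≤ d) → b i * b j = 0) :
    IsGradedMonomialBasis b (fun i => weight k i) := by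
  intro i j
  by_cases hc1 : (j : ℕ) = 0 ∧ (i : ℕ) + 3 ≤ k
  · rw [show j = ⟨0, by omega⟩ from Fin.ext hc1.1]
    exact Or.inr ⟨_, by simp only [weight_succ_of_lt hc1.2, weight_zero], h1 i hc1.2⟩
  by_cases hc2 : (j : ℕ) + 2 = k ∧ k ≤ (i : ℕ) + 2 ∧ (i : ℕ) + 2 ≤ d
  · rw [show j = ⟨k - 2, by omega⟩ from Fin.ext (by dsimp only; omega)]
    exact Or.inr ⟨_, weight_succ_of_le hk hc2.2.1, h2 i hc2.2.1 hc2.2.2⟩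
  exact Or.inl (h0 i j hc1 hc2)

lemma exists_mul_eq
    (h1 : ∀ i : Fin d, (hi : (i : ℕ) + 3 ≤ k) →
      b i * b ⟨0, by omega⟩ = b ⟨(i : ℕ) + 1, by omega⟩)
    (h2 : ∀ i : Fin d, k ≤ (i : ℕ) + 2 → (hi2 : (i : ℕ) + 2 ≤ d) →
      b i * b ⟨k - 2, by omega⟩ = b ⟨(i : ℕ) + 1, by omega⟩)
    (l : Fin d) (hl : 2 ≤ weight k l) :
    ∃ i j : Fin d, weight k i + weight k j = weight k l ∧ b i * b j = b l := by
  obtain ⟨_ | n, hn⟩ := l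
  · simp [weight_zero] at hl
  by_cases h : n + 3 ≤ k
  · exact ⟨⟨n, by omega⟩, ⟨0, by omega⟩, by simp only [weight_succ_of_lt h, weight_zero],
      h1 ⟨n, by omega⟩ h⟩
  · exact ⟨⟨n, by omega⟩, ⟨k - 2, by omega⟩, (weight_succ_of_le (n := n) hk (by omega)).symm,
      h2 ⟨n, by omega⟩ (by dsimp only; omega) (by dsimp only; omega)⟩

lemma mul_eq_zero
    (h0 : ∀ i j : Fin d, ¬((j : ℕ) = 0 ∧ (i : ℕ) + 3 ≤ k) →
      ¬((j : ℕ) + 2 = k ∧ k ≤ (i : ℕ) + 2 ∧ (i : ℕ) + 2 ≤ d) → b i * b j = 0)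
    (i j : Fin d) (hj : k ≤ weight k j) : b i * b j = 0 := by
  have : k - 1 ≤ (j : ℕ) := by
    by_contra! h
    rw [weight_of_le (by omega)] at hj
    omega
  exact h0 i j (by omega) (by omega)

lemma image_weight_eq_one :
    b '' {i : Fin d | weight k i = 1} = {b ⟨0, by omega⟩} := by
  rw [← Set.image_singleton]
  congr 1
  ext i
  simp [weight_eq_one_iff, Fin.ext_iff]

end E

section Statement
variable {F A : Type*} [Field F] [NonUnitalNonAssocRing A] [Module F A]
  [SMulCommClass F A A] [IsScalarTower F A A]

theorem stmt8 (k d : ℕ) (hk : 2 ≤ k) (hkd : k ≤ d)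
    (b : Module.Basis (Fin d) F A)
    (h1 : ∀ i : Fin d, (hi : (i : ℕ) + 3 ≤ k) →
      b i * b ⟨0, by omega⟩ = b ⟨(i : ℕ) + 1, by omega⟩)
    (h2 : ∀ i : Fin d, k ≤ (i : ℕ) + 2 → (hi2 : (i : ℕ) + 2 ≤ d) →
      b i * b ⟨k - 2, by omega⟩ = b ⟨(i : ℕ) + 1, by omega⟩)
    (h0 : ∀ i j : Fin d, ¬((j : ℕ) = 0 ∧ (i : ℕ) + 3 ≤ k) →
      ¬((j : ℕ) + 2 = k ∧ k ≤ (i : ℕ) + 2 ∧ (i : ℕ) + 2 ≤ d) → b i * b j = 0) :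
    IsKRound A k ∧ Generates F {b ⟨0, by omega⟩} ∧
      lenS F {b ⟨0, by omega⟩} = (k - 1) * d - (k - 2) * (k - 1) ∧
      ∃ S : Set A, S.Finite ∧ Generates F S ∧
        (k - 1) * d - (k - 2) * (k - 1) ≤ lenS F S := by
  have hb := E.isGradedMonomialBasis hk hkd h1 h2 h0
  have hwt (i : Fin d) : 1 ≤ weight k i := (le_weight k i).trans' (Nat.le_add_left 1 i)
  have hfac := E.exists_mul_eq hk hkd h1 h2
  have hmax (i : Fin d) : weight k i ≤ weight k (⟨d - 1, by omega⟩ : Fin d) :=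
    weight_mono k (Nat.le_sub_one_of_lt i.isLt)
  have hgen := generates_of_Lspan_eq_top (Lspan_eq_top hwt hfac hmax)
  have hlen : lenS F _ = weight k (d - 1) := hb.lenS_eq hwt hfac hmax
  rw [E.image_weight_eq_one hk hkd] at hgen hlen
  rw [weight_pred hk hkd] at hlen
  exact ⟨hb.isKRound hwt (E.mul_eq_zero h0), hgen, hlen,
    _, Set.finite_singleton _, hgen, hlen.ge⟩

end Statement

end P
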